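/- arXiv:2002.02344 — 2 statements merged into one kernel-verified Lean document; each statement's English description precedes it below -/
import Mathlib

section
/- Let n be a positive integer and let A_1,…,A_n, B_1,…,B_n be bounded linear operators on a Banach space. Then there exists l ∈ {1,…,n} such that, setting ζ_j = e^{2πijl/n}, one has ‖∑_{j=1}^n A_j B_j‖ ≤ ‖∑_{j=1}^n ζ_j A_j‖ · ‖∑_{j=1}^n (conj ζ_j) B_j‖. -/
/-!
Write `P l = ∑ⱼ ζⱼ • A j` and `Q l = ∑ⱼ conj ζⱼ • B j` with `ζⱼ = e^{2πijl/n}`. By orthogonality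
of the characters of `ℤ/nℤ`, averaging `P l * Q l` over `l` kills the cross terms `A j * B k`
with `j ≠ k`, so `∑ₗ P l * Q l = n • ∑ⱼ A j * B j`. Hence some `‖P l * Q l‖` is at least
`‖∑ⱼ A j * B j‖`, and `‖P l * Q l‖ ≤ ‖P l‖ * ‖Q l‖`.
-/

open Complex Finset

theorem Finset.exists_norm_le_of_sum_eq_card_nsmul {ι E : Type*} [NormedAddCommGroup E]
    [NormedSpace ℝ E] {s : Finset ι} (hs : s.Nonempty) {x : ι → E} {y : E}
    (h : ∑ i ∈ s, x i = #s • y) : ∃ i ∈ s, ‖y‖ ≤ ‖x i‖ := by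
  refine exists_le_of_sum_le hs ?_
  calc ∑ _ ∈ s, ‖y‖ = ‖∑ i ∈ s, x i‖ := by rw [h, RCLike.norm_nsmul ℝ, sum_const]
    _ ≤ ∑ i ∈ s, ‖x i‖ := norm_sum_le _ _

theorem sum_Icc_pow_of_pow_eq_one {R : Type*} [CommRing R] [IsDomain R] [DecidableEq R]
    {w : R} {n : ℕ} (hw : w ^ n = 1) :
    ∑ l ∈ Icc 1 n, w ^ l = if w = 1 then (n : R) else 0 := by
  split_ifs with h1
  · simp [h1]
  · have hgeom : (∑ l ∈ range n, w ^ l) * (w - 1) = 0 := by rw [geom_sum_mul, hw, sub_self]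
    have hzero : ∑ l ∈ range n, w ^ l = 0 :=
      (mul_eq_zero.1 hgeom).resolve_right (sub_ne_zero.2 h1)
    rw [← Finset.Ico_add_one_right_eq_Icc, sum_Ico_eq_sum_range]
    simp [pow_add, ← mul_sum, hzero]

theorem sum_mul_sum_smul_of_orthogonal {ι κ 𝕜 R : Type*} [CommSemiring 𝕜]
    [NonUnitalNonAssocSemiring R] [Module 𝕜 R] [IsScalarTower 𝕜 R R] [SMulCommClass 𝕜 R R]
    [DecidableEq ι] (s : Finset ι) (L : Finset κ) (c d : ι → κ → 𝕜) (N : 𝕜)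
    (h : ∀ j ∈ s, ∀ k ∈ s, ∑ l ∈ L, c j l * d k l = if j = k then N else 0) (a b : ι → R) :
    ∑ l ∈ L, (∑ j ∈ s, c j l • a j) * (∑ k ∈ s, d k l • b k) = N • ∑ j ∈ s, a j * b j := by
  simp_rw [sum_mul_sum, smul_mul_smul_comm]
  rw [sum_comm, smul_sum]
  refine sum_congr rfl fun j hj => ?_
  rw [sum_comm]
  simp_rw [← sum_smul]
  rw [sum_congr rfl fun k hk => by rw [h j hj k hk], sum_eq_single_of_mem j hj]
  · simp
  · intro k _ hkj
    simp [Ne.symm hkj]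

theorem exp_mul_conj_exp_eq_zpow_pow (n : ℕ) (j k l : ℕ) :
    exp (2 * Real.pi * I * j * l / n) * starRingEnd ℂ (exp (2 * Real.pi * I * k * l / n)) =
      (exp (2 * Real.pi * I / n) ^ ((j : ℤ) - k)) ^ l := by
  rw [← exp_conj, ← exp_add, ← exp_int_mul, ← exp_nat_mul]
  congr 1
  simp only [map_div₀, map_mul, conj_I, conj_ofReal, map_ofNat, conj_natCast]
  push_cast
  ring

theorem sum_exp_mul_conj_exp {n : ℕ} (hn : 0 < n) {j k : ℕ} (hj : j ∈ Icc 1 n)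
    (hk : k ∈ Icc 1 n) :
    ∑ l ∈ Icc 1 n,
        exp (2 * Real.pi * I * j * l / n) * starRingEnd ℂ (exp (2 * Real.pi * I * k * l / n)) =
      if j = k then (n : ℂ) else 0 := by
  have hζ := isPrimitiveRoot_exp n hn.ne'
  have hpow : (exp (2 * Real.pi * I / n) ^ ((j : ℤ) - k)) ^ n = 1 := by
    rw [← zpow_natCast, ← zpow_mul, mul_comm _ (n : ℤ), zpow_mul, zpow_natCast, hζ.pow_eq_one,
      one_zpow]
  have hpow_eq_one : exp (2 * Real.pi * I / n) ^ ((j : ℤ) - k) = 1 ↔ j = k := by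
    rw [hζ.zpow_eq_one_iff_dvd]
    simp only [mem_Icc] at hj hk
    constructor
    · intro hdvd
      have := Int.eq_zero_of_abs_lt_dvd hdvd (by rw [abs_lt]; omega)
      omega
    · rintro rfl
      simp
  simp_rw [exp_mul_conj_exp_eq_zpow_pow, sum_Icc_pow_of_pow_eq_one hpow, hpow_eq_one]

theorem stmt0_general {E : Type*} [NormedAddCommGroup E] [NormedSpace ℂ E]
    (n : ℕ) (hn : 0 < n) (A B : ℕ → E →L[ℂ] E) :
    ∃ l ∈ Finset.Icc 1 n,
      ‖∑ j ∈ Finset.Icc 1 n, A j ∘L B j‖ ≤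
        ‖∑ j ∈ Finset.Icc 1 n,
            Complex.exp (2 * Real.pi * Complex.I * j * l / n) • A j‖ *
        ‖∑ j ∈ Finset.Icc 1 n,
            (starRingEnd ℂ) (Complex.exp (2 * Real.pi * Complex.I * j * l / n)) • B j‖ := by
  let c : ℕ → ℕ → ℂ := fun j l => exp (2 * Real.pi * I * j * l / n)
  have hsum := sum_mul_sum_smul_of_orthogonal (Icc 1 n) (Icc 1 n) c
    (fun k l => starRingEnd ℂ (c k l)) n (fun j hj k hk => sum_exp_mul_conj_exp hn hj hk) A B
  obtain ⟨l, hl, hle⟩ :=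
    exists_norm_le_of_sum_eq_card_nsmul ⟨1, mem_Icc.2 ⟨le_rfl, hn⟩⟩
      (y := ∑ j ∈ Icc 1 n, A j * B j) (hsum.trans (by simp [Nat.cast_smul_eq_nsmul]))
  exact ⟨l, hl, hle.trans (norm_mul_le _ _)⟩

theorem stmt0 {E : Type*} [NormedAddCommGroup E] [NormedSpace ℂ E] [CompleteSpace E]
    (n : ℕ) (hn : 0 < n) (A B : ℕ → E →L[ℂ] E) :
    ∃ l ∈ Finset.Icc 1 n,
      ‖∑ j ∈ Finset.Icc 1 n, A j ∘L B j‖ ≤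
        ‖∑ j ∈ Finset.Icc 1 n,
            Complex.exp (2 * Real.pi * Complex.I * j * l / n) • A j‖ *
        ‖∑ j ∈ Finset.Icc 1 n,
            (starRingEnd ℂ) (Complex.exp (2 * Real.pi * Complex.I * j * l / n)) • B j‖ :=
  stmt0_general n hn A B
end

section
/- There is a constant C > 0, depending only on p ∈ (1,∞) and the dimension n, such that for every α > 0 and every z ∈ ℂ^n with |z| ≤ 1/√α, the normalized reproducing kernel k_z satisfies ‖k_z − 1‖_p ≤ C √α |z|, where 1 denotes the constant function. -/
open MeasureTheory

/-- Lebesgue measure on `ℂ^n`, via the identification `ℂ^n ≅ ℝ^{2n}` (product measure). -/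
noncomputable instance (n : ℕ) : MeasureSpace (EuclideanSpace ℂ (Fin n)) :=
  { toMeasurableSpace := WithLp.measurableSpace 2 (Fin n → ℂ)
    volume := (volume : Measure (Fin n → ℂ)).map (WithLp.toLp 2) }

/-- The normalized reproducing kernel `k_w(z) = exp(α z·w̄ − (α/2)|w|²)` of the Fock space.
Note that `z·w̄ = ⟪w, z⟫` in Mathlib's convention for the inner product on `ℂ^n`. -/
noncomputable def fockKernel (n : ℕ) (α : ℝ) (w z : EuclideanSpace ℂ (Fin n)) : ℂ :=
  Complex.exp (α * (inner ℂ w z : ℂ) - α / 2 * (‖w‖ : ℂ) ^ 2)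

/-!
Write `t = √α |z| ≤ 1` and `s = √α |w|`. The exponent of `k_z(w)` has modulus at most
`t s + t²/2`, so `|k_z(w) - 1| ≤ (t s + t²/2) e^{t s + t²/2} ≤ t e^{2s + 1/2}`, which is linear in
`t`. Against the weight `e^{-s²/2}` the factor `e^{2s}` costs only half of the Gaussian, and the
remaining `e^{-s²/4}`, raised to the `p`-th power and integrated, exactly cancels the normalizing
constant up to a factor `2^n`.
-/

open Real

lemma integral_exp_neg_mul_sq_norm_complex {b : ℝ} (hb : 0 < b) :
    ∫ z : ℂ, exp (-b * ‖z‖ ^ 2) = π / b := by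
  simpa using GaussianFourier.integral_rexp_neg_mul_sq_norm (V := ℂ) hb

lemma exp_neg_mul_sq_norm_eq_prod {n : ℕ} (b : ℝ) (w : EuclideanSpace ℂ (Fin n)) :
    exp (-b * ‖w‖ ^ 2) = ∏ i, exp (-b * ‖w i‖ ^ 2) := by
  rw [EuclideanSpace.norm_eq, sq_sqrt (by positivity), Finset.mul_sum, ← exp_sum]

lemma integral_exp_neg_mul_sq_norm_euclideanSpace (n : ℕ) {b : ℝ} (hb : 0 < b) :
    ∫ w : EuclideanSpace ℂ (Fin n), exp (-b * ‖w‖ ^ 2) = (π / b) ^ n := by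
  change ∫ w, _ ∂(volume.map (MeasurableEquiv.toLp 2 (Fin n → ℂ))) = _
  simp only [integral_map_equiv, exp_neg_mul_sq_norm_eq_prod b]
  rw [volume_pi]
  refine (integral_fintype_prod_eq_pow (fun z : ℂ => exp (-b * ‖z‖ ^ 2))).trans ?_
  rw [integral_exp_neg_mul_sq_norm_complex hb, Fintype.card_fin]

lemma integrable_exp_neg_mul_sq_norm_euclideanSpace (n : ℕ) {b : ℝ} (hb : 0 < b) :
    Integrable fun w : EuclideanSpace ℂ (Fin n) => exp (-b * ‖w‖ ^ 2) := by
  refine Integrable.of_integral_ne_zero ?_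
  rw [integral_exp_neg_mul_sq_norm_euclideanSpace n hb]
  positivity

lemma norm_fockKernel_sub_one_le {n : ℕ} {α : ℝ} (hα : 0 ≤ α) (z w : EuclideanSpace ℂ (Fin n)) :
    ‖fockKernel n α z w - 1‖ ≤
      (α * ‖z‖ * ‖w‖ + α / 2 * ‖z‖ ^ 2) * exp (α * ‖z‖ * ‖w‖ + α / 2 * ‖z‖ ^ 2) := by
  set u : ℂ := α * inner ℂ z w - α / 2 * (‖z‖ : ℂ) ^ 2
  have hu : ‖u‖ ≤ α * ‖z‖ * ‖w‖ + α / 2 * ‖z‖ ^ 2 := by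
    refine (norm_sub_le _ _).trans (add_le_add ?_ (le_of_eq ?_))
    · rw [norm_mul, Complex.norm_real, norm_of_nonneg hα, mul_assoc]
      exact mul_le_mul_of_nonneg_left (norm_inner_le_norm z w) hα
    · simp [norm_of_nonneg hα]
  calc ‖Complex.exp u - 1‖ ≤ ‖u‖ * exp ‖u‖ := by
        simpa using Complex.norm_exp_sub_sum_le_norm_mul_exp u 1
    _ ≤ _ := by gcongr

lemma mul_exp_mul_exp_neg_sq_le {t s : ℝ} (ht0 : 0 ≤ t) (ht1 : t ≤ 1) (hs : 0 ≤ s) :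
    (t * s + t ^ 2 / 2) * exp (t * s + t ^ 2 / 2) * exp (-(s ^ 2 / 2))
      ≤ t * exp 5 * exp (-(s ^ 2 / 4)) := by
  have hlin : t * s + t ^ 2 / 2 ≤ t * exp s := by
    nlinarith [add_one_le_exp s]
  have hexp : exp (t * s + t ^ 2 / 2) ≤ exp (s + 1 / 2) := by
    rw [exp_le_exp]; nlinarith [mul_le_one₀ ht1 ht0 ht1]
  calc (t * s + t ^ 2 / 2) * exp (t * s + t ^ 2 / 2) * exp (-(s ^ 2 / 2))
      ≤ t * exp s * exp (s + 1 / 2) * exp (-(s ^ 2 / 2)) := by gcongr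
    _ = t * exp (2 * s + 1 / 2 - s ^ 2 / 2) := by
        rw [mul_assoc, mul_assoc, ← exp_add, ← exp_add]; ring_nf
    _ ≤ t * exp (5 + -(s ^ 2 / 4)) := by
        gcongr; nlinarith [sq_nonneg (s - 4)]
    _ = t * exp 5 * exp (-(s ^ 2 / 4)) := by rw [exp_add, mul_assoc]

lemma norm_fockKernel_sub_one_mul_gaussian_le {n : ℕ} {α : ℝ} (hα : 0 < α)
    {z : EuclideanSpace ℂ (Fin n)} (hz : ‖z‖ ≤ 1 / √α) (w : EuclideanSpace ℂ (Fin n)) :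
    ‖fockKernel n α z w - 1‖ * exp (-(α / 2) * ‖w‖ ^ 2)
      ≤ √α * ‖z‖ * exp 5 * exp (-(α / 4) * ‖w‖ ^ 2) := by
  have hsq : √α ^ 2 = α := sq_sqrt hα.le
  have ht1 : √α * ‖z‖ ≤ 1 := by rwa [le_div_iff₀' (sqrt_pos.2 hα)] at hz
  have hexpo : α * ‖z‖ * ‖w‖ + α / 2 * ‖z‖ ^ 2
      = √α * ‖z‖ * (√α * ‖w‖) + (√α * ‖z‖) ^ 2 / 2 := by
    linear_combination (-(‖z‖ * ‖w‖) - ‖z‖ ^ 2 / 2) * hsq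
  have hgauss (c : ℝ) : -(α / c) * ‖w‖ ^ 2 = -((√α * ‖w‖) ^ 2 / c) := by
    rw [mul_pow, hsq]; ring
  calc ‖fockKernel n α z w - 1‖ * exp (-(α / 2) * ‖w‖ ^ 2)
      ≤ (α * ‖z‖ * ‖w‖ + α / 2 * ‖z‖ ^ 2) * exp (α * ‖z‖ * ‖w‖ + α / 2 * ‖z‖ ^ 2)
          * exp (-(α / 2) * ‖w‖ ^ 2) := by
        gcongr; exact norm_fockKernel_sub_one_le hα.le z w
    _ ≤ √α * ‖z‖ * exp 5 * exp (-(α / 4) * ‖w‖ ^ 2) := by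
        rw [hexpo, hgauss, hgauss]
        exact mul_exp_mul_exp_neg_sq_le (by positivity) ht1 (by positivity)

noncomputable def fockLpNorm (n : ℕ) (α p : ℝ) (f : EuclideanSpace ℂ (Fin n) → ℂ) : ℝ :=
  ((α * p / (2 * π)) ^ n * ∫ w, (‖f w‖ * exp (-(α / 2) * ‖w‖ ^ 2)) ^ p) ^ (1 / p)

lemma fockLpNorm_le_of_le_gaussian {n : ℕ} {α p M : ℝ} (hα : 0 < α) (hp : 0 < p)
    {f : EuclideanSpace ℂ (Fin n) → ℂ}
    (hf : ∀ w, ‖f w‖ * exp (-(α / 2) * ‖w‖ ^ 2) ≤ M * exp (-(α / 4) * ‖w‖ ^ 2)) :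
    fockLpNorm n α p f ≤ (2 ^ n) ^ (1 / p) * M := by
  set g := fun w => ‖f w‖ * exp (-(α / 2) * ‖w‖ ^ 2)
  have hg0 (w) : 0 ≤ g w := by positivity
  have hM : 0 ≤ M := by simpa using (hg0 0).trans (hf 0)
  have hb : 0 < p * α / 4 := by positivity
  have hgp (w) : g w ^ p ≤ M ^ p * exp (-(p * α / 4) * ‖w‖ ^ 2) := by
    calc g w ^ p ≤ (M * exp (-(α / 4) * ‖w‖ ^ 2)) ^ p := rpow_le_rpow (hg0 w) (hf w) hp.le
      _ = M ^ p * exp (-(p * α / 4) * ‖w‖ ^ 2) := by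
        rw [mul_rpow hM (exp_pos _).le, ← exp_mul]; ring_nf
  have hint : ∫ w, g w ^ p ≤ M ^ p * (π / (p * α / 4)) ^ n := by
    calc ∫ w, g w ^ p ≤ ∫ w, M ^ p * exp (-(p * α / 4) * ‖w‖ ^ 2) :=
          integral_mono_of_nonneg (ae_of_all _ fun w => rpow_nonneg (hg0 w) p)
            ((integrable_exp_neg_mul_sq_norm_euclideanSpace n hb).const_mul _) (ae_of_all _ hgp)
      _ = M ^ p * (π / (p * α / 4)) ^ n := by
          rw [integral_const_mul, integral_exp_neg_mul_sq_norm_euclideanSpace n hb]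
  have hnormalize : (α * p / (2 * π)) ^ n * (M ^ p * (π / (p * α / 4)) ^ n) = 2 ^ n * M ^ p := by
    rw [mul_left_comm, ← mul_pow]
    field_simp
    ring
  calc fockLpNorm n α p f ≤ (2 ^ n * M ^ p) ^ (1 / p) := by
        refine rpow_le_rpow (by positivity) ?_ (by positivity)
        rw [← hnormalize]
        gcongr
    _ = (2 ^ n) ^ (1 / p) * M := by
        rw [mul_rpow (by positivity) (rpow_nonneg hM _), ← rpow_mul hM, mul_one_div_cancel hp.ne',
          rpow_one]

theorem stmt6 (n : ℕ) (p : ℝ) (hp : 1 < p) :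
    ∃ C > (0 : ℝ), ∀ α : ℝ, 0 < α → ∀ z : EuclideanSpace ℂ (Fin n),
      ‖z‖ ≤ 1 / Real.sqrt α →
      ((α * p / (2 * Real.pi)) ^ n *
          ∫ w : EuclideanSpace ℂ (Fin n),
            (‖fockKernel n α z w - 1‖ * Real.exp (-(α / 2) * ‖w‖ ^ 2)) ^ p) ^ (1 / p)
        ≤ C * Real.sqrt α * ‖z‖ := by
  refine ⟨(2 ^ n) ^ (1 / p) * exp 5, by positivity, fun α hα z hz => ?_⟩
  calc fockLpNorm n α p (fun w => fockKernel n α z w - 1)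
      ≤ (2 ^ n) ^ (1 / p) * (√α * ‖z‖ * exp 5) :=
        fockLpNorm_le_of_le_gaussian hα (by linarith)
          (norm_fockKernel_sub_one_mul_gaussian_le hα hz)
    _ = (2 ^ n) ^ (1 / p) * exp 5 * √α * ‖z‖ := by ring
end
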